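/- arXiv:2605.01558 — 2 statements merged into one kernel-verified Lean document; each statement's English description precedes it below -/
import Mathlib

section
/- Under the setting of the previous weak-duality statement, define V_T* = φ and V_t*(x) = min_{u ∈ U} [ℓ(x,u) + V_{t+1}*(f(x,u))] for t = T−1,…,0. Suppose α_t : X → U are measurable selectors with V_t*(x) = ℓ(x,α_t(x)) + V_{t+1}*(f(x,α_t(x))) for all x. Given any initial probability measure ρ₀ on X, define ρ_{t+1} = (x ↦ f(x,α_t(x)))_# ρ_t and λ_t = (x ↦ (x,α_t(x)))_# ρ_t. Then ∫ V_0* dρ_0 = Σ_{t=0}^{T−1} ∫ ℓ dλ_t + ∫ φ dρ_T. -/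
open MeasureTheory

/-- strong duality / attainment: with the Bellman value functions
`V_T = φ`, `V_t(x) = min_u [ℓ(x,u) + V_{t+1}(f(x,u))]`, a measurable selector
`α_t` achieving the minimum pointwise, and the measures generated by the
selector from `ρ₀`, the duality inequality holds with equality. -/
theorem stmt9 {X U : Type*}
    [MetricSpace X] [CompactSpace X] [MeasurableSpace X] [BorelSpace X]
    [MetricSpace U] [CompactSpace U] [Nonempty U] [MeasurableSpace U] [BorelSpace U]
    (T : ℕ)
    (f : X × U → X) (hf : Continuous f)
    (ℓ : X × U → ℝ) (hℓ : Continuous ℓ)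
    (φ : X → ℝ) (hφ : Continuous φ)
    (V : Fin (T + 1) → X → ℝ) (hV : ∀ t, Continuous (V t))
    (hVT : V (Fin.last T) = φ)
    (hbellman : ∀ (t : Fin T) (x : X),
      V t.castSucc x = ⨅ u : U, (ℓ (x, u) + V t.succ (f (x, u))))
    (α : Fin T → X → U) (hα : ∀ t, Measurable (α t))
    (hsel : ∀ (t : Fin T) (x : X),
      V t.castSucc x = ℓ (x, α t x) + V t.succ (f (x, α t x)))
    (ρ : Fin (T + 1) → Measure X) [∀ t, IsProbabilityMeasure (ρ t)]
    (hρ : ∀ t : Fin T,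
      ρ t.succ = Measure.map (fun x => f (x, α t x)) (ρ t.castSucc)) :
    ∫ x, V 0 x ∂(ρ 0) =
      (∑ t : Fin T,
        ∫ p, ℓ p ∂(Measure.map (fun x => (x, α t x)) (ρ t.castSucc))) +
      ∫ x, φ x ∂(ρ (Fin.last T)) := by
  -- X is nonempty since it carries a probability measure
  haveI hne : Nonempty X := by
    by_contra h
    rw [not_nonempty_iff] at h
    have h1 : (ρ 0) Set.univ = 1 := measure_univ
    rw [Set.univ_eq_empty_iff.mpr h, measure_empty] at h1
    exact zero_ne_one h1
  -- measurability facts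
  have hmg : ∀ t : Fin T, Measurable (fun x => f (x, α t x)) :=
    fun t => hf.measurable.comp (measurable_id.prodMk (hα t))
  have hmp : ∀ t : Fin T, Measurable (fun x => (x, α t x)) :=
    fun t => measurable_id.prodMk (hα t)
  -- bounded measurable functions are integrable w.r.t. probability measures
  have hint : ∀ (μ : Measure X) [IsProbabilityMeasure μ] (h : X → ℝ), Measurable h →
      (∃ C, ∀ x, ‖h x‖ ≤ C) → Integrable h μ := by
    intro μ _ h hm ⟨C, hC⟩
    exact (integrable_const C).mono' hm.aestronglyMeasurable (ae_of_all _ hC)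
  -- bounds for ℓ ∘ (id, α t) and for V t
  have hbℓ : ∃ C, ∀ p : X × U, ‖ℓ p‖ ≤ C := by
    obtain ⟨C, -, hC⟩ := (isCompact_range hℓ.norm).exists_isGreatest (Set.range_nonempty _)
    exact ⟨C, fun q => hC (Set.mem_range_self q)⟩
  have hbV : ∀ t : Fin (T + 1), ∃ C, ∀ x : X, ‖V t x‖ ≤ C := by
    intro t
    obtain ⟨C, -, hC⟩ := (isCompact_range (hV t).norm).exists_isGreatest (Set.range_nonempty _)
    exact ⟨C, fun y => hC (Set.mem_range_self y)⟩
  -- the key one-step identity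
  have key : ∀ t : Fin T,
      ∫ x, V t.castSucc x ∂(ρ t.castSucc) =
        (∫ p, ℓ p ∂(Measure.map (fun x => (x, α t x)) (ρ t.castSucc))) +
        ∫ x, V t.succ x ∂(ρ t.succ) := by
    intro t
    rw [hρ t,
      integral_map (hmg t).aemeasurable (hV t.succ).aestronglyMeasurable,
      integral_map (hmp t).aemeasurable hℓ.aestronglyMeasurable]
    have i1 : Integrable (fun x => ℓ (x, α t x)) (ρ t.castSucc) := by
      obtain ⟨C, hC⟩ := hbℓ
      exact hint _ _ (hℓ.measurable.comp (hmp t)) ⟨C, fun x => hC _⟩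
    have i2 : Integrable (fun x => V t.succ (f (x, α t x))) (ρ t.castSucc) := by
      obtain ⟨C, hC⟩ := hbV t.succ
      exact hint _ _ ((hV t.succ).measurable.comp (hmg t)) ⟨C, fun x => hC _⟩
    rw [← integral_add i1 i2]
    exact integral_congr_ae (ae_of_all _ (hsel t))
  -- telescoping
  set F : ℕ → ℝ := fun n => if h : n < T + 1 then ∫ x, V ⟨n, h⟩ x ∂(ρ ⟨n, h⟩) else 0 with hF
  have hFt : ∀ t : Fin T,
      (∫ p, ℓ p ∂(Measure.map (fun x => (x, α t x)) (ρ t.castSucc)))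
        = F t - F (t + 1) := by
    intro t
    have h1 : (t : ℕ) < T + 1 := lt_of_lt_of_le t.2 (Nat.le_succ T)
    have h2 : (t : ℕ) + 1 < T + 1 := Nat.succ_lt_succ t.2
    have e1 : F t = ∫ x, V t.castSucc x ∂(ρ t.castSucc) := by
      simp only [hF, dif_pos h1]; rfl
    have e2 : F (t + 1) = ∫ x, V t.succ x ∂(ρ t.succ) := by
      simp only [hF, dif_pos h2]; rfl
    rw [e1, e2, key t]; ring
  calc ∫ x, V 0 x ∂(ρ 0) = F 0 - F T + F T := by
        have hT : T < T + 1 := Nat.lt_succ_self T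
        have e0 : F 0 = ∫ x, V 0 x ∂(ρ 0) := by
          simp only [hF, dif_pos (Nat.succ_pos T)]; rfl
        rw [e0]; ring
    _ = (∑ t : Fin T,
        ∫ p, ℓ p ∂(Measure.map (fun x => (x, α t x)) (ρ t.castSucc))) +
      ∫ x, φ x ∂(ρ (Fin.last T)) := by
        congr 1
        · rw [← Finset.sum_range_sub' F T]
          rw [Finset.sum_congr rfl (fun t _ => hFt t)]
          exact (Fin.sum_univ_eq_sum_range (fun i => F i - F (i + 1)) T).symm
        · have : F T = ∫ x, V (Fin.last T) x ∂(ρ (Fin.last T)) := by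
            simp only [hF, dif_pos (Nat.lt_succ_self T)]; rfl
          rw [this, hVT]
end

section
/- Let H : ℝᵐ → ℝⁿ be linear with range B, admitting H⁺ linear with H H⁺ = id on B. Let c : ℝⁿ → ℝ be bounded measurable. Then inf over Borel probability measures μ on ℝⁿ with μ(B) = 1 of ∫ c dμ equals inf over Borel probability measures ν on ℝᵐ of ∫ c(H g) dν(g). -/
open MeasureTheory

/-- data-driven optimization over behavioral measures: for a
bounded measurable cost `c`, the infimum of `∫ c dμ` over probability measures
supported on `B = range H` equals the infimum of `∫ c(Hg) dν` over probability
measures on coefficient space. -/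
theorem stmt16 (m n : ℕ)
    (H : (Fin m → ℝ) →ₗ[ℝ] (Fin n → ℝ))
    (Hplus : (Fin n → ℝ) →ₗ[ℝ] (Fin m → ℝ))
    (hinv : ∀ w ∈ Set.range H, H (Hplus w) = w)
    (c : (Fin n → ℝ) → ℝ) (hc : Measurable c)
    (hbdd : ∃ M : ℝ, ∀ w, |c w| ≤ M) :
    sInf {r : ℝ | ∃ μ : Measure (Fin n → ℝ),
        IsProbabilityMeasure μ ∧ μ (Set.range H) = 1 ∧ r = ∫ w, c w ∂μ}
      = sInf {r : ℝ | ∃ ν : Measure (Fin m → ℝ),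
          IsProbabilityMeasure ν ∧ r = ∫ g, c (H g) ∂ν} := by
  have hH : Measurable H := H.continuous_of_finiteDimensional.measurable
  have hHp : Measurable Hplus := Hplus.continuous_of_finiteDimensional.measurable
  have hrange : MeasurableSet (Set.range H) := by
    have : (Set.range H) = (LinearMap.range H : Set (Fin n → ℝ)) := by
      ext x; simp [LinearMap.mem_range]
    rw [this]
    exact (Submodule.closed_of_finiteDimensional _).measurableSet
  congr 1
  ext r
  constructor
  · rintro ⟨μ, hμ, hμ1, rfl⟩
    refine ⟨Measure.map Hplus μ, Measure.isProbabilityMeasure_map hHp.aemeasurable, ?_⟩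
    rw [show (∫ g, c (H g) ∂Measure.map Hplus μ) = ∫ w, (fun g => c (H g)) (Hplus w) ∂μ from
      integral_map hHp.aemeasurable (hc.comp hH).aestronglyMeasurable]
    apply integral_congr_ae
    have hae : ∀ᵐ w ∂μ, w ∈ Set.range H := by
      rw [ae_iff]
      have := measure_compl hrange (measure_ne_top μ _)
      simp only [hμ1] at this
      simpa [Set.compl_def, this] using this.trans (by simp)
    filter_upwards [hae] with w hw
    rw [hinv w hw]
  · rintro ⟨ν, hν, rfl⟩
    refine ⟨Measure.map H ν, Measure.isProbabilityMeasure_map hH.aemeasurable, ?_, ?_⟩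
    · rw [Measure.map_apply hH hrange]
      simp [Set.preimage_range]
    · rw [integral_map hH.aemeasurable hc.aestronglyMeasurable]
end
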